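/- arXiv:2009.14362 — 3 statements merged into one kernel-verified Lean document; each statement's English description precedes it below -/
import Mathlib

section
/- Let ℓ ≥ 1, r > 0, k ≥ 1, and let q : ℝ^ℓ → ℝ be real analytic on the open ball B(0,r) ⊂ ℝ^ℓ. Assume the iterated derivatives D^j q(0) vanish for every j with 1 ≤ j < k, and let P : ℝ^ℓ → ℝ be the degree-k Taylor term of q at 0, P(x) = (1/k!)·D^k q(0)[x,…,x]. Suppose (x_i) is a sequence in B(0,r) with x_i ≠ 0 for all i, x_i → 0, x_i/‖x_i‖ → w for some unit vector w, and Dq(x_i) = 0 for every i. Then DP(w) = 0, i.e. w is a critical point of the homogeneous polynomial P. -/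
/-!
Since `Dq` is analytic at `0` and its derivatives of order `< k - 1` vanish there, Taylor's
formula gives `Dq(y) = T(y, …, y) / (k - 1)! + O(‖y‖ ^ k)` with `T = D^(k-1)(Dq)(0)`. At the
critical points `x i` this says `T(x i, …, x i) = O(‖x i‖ ^ k)`, and by homogeneity
`T(u, …, u) = O(‖x i‖) → 0` for the directions `u = x i / ‖x i‖`; passing to the limit,
`T(w, …, w) = 0`, i.e. `D^k q(0)[w, …, w, v] = 0` for all `v`. As `D^k q(0)` is symmetric,
`DP(w) v = D^k q(0)[w, …, w, v] / (k - 1)!`, which therefore vanishes.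
-/

open Filter Asymptotics Topology Nat Function Equiv

section PowerSeries

variable {𝕜 E F : Type*} [NontriviallyNormedField 𝕜] [CharZero 𝕜]
  [NormedAddCommGroup E] [NormedSpace 𝕜 E] [NormedAddCommGroup F] [NormedSpace 𝕜 F]
  [CompleteSpace F]

theorem HasFPowerSeriesOnBall.apply_diag_eq_inv_factorial_smul {p : FormalMultilinearSeries 𝕜 E F}
    {f : E → F} {x₀ : E} {r : ENNReal} (hp : HasFPowerSeriesOnBall f p x₀ r) (n : ℕ) (y : E) :
    p n (fun _ => y) = (n ! : 𝕜)⁻¹ • iteratedFDeriv 𝕜 n f x₀ (fun _ => y) := by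
  rw [← hp.factorial_smul y n, ← Nat.cast_smul_eq_nsmul 𝕜, inv_smul_smul₀]
  exact_mod_cast n.factorial_ne_zero

theorem AnalyticAt.isBigO_sub_iteratedFDeriv_diag {f : E → F} {x₀ : E} (hf : AnalyticAt 𝕜 f x₀)
    {m : ℕ} (hlow : ∀ j < m, iteratedFDeriv 𝕜 j f x₀ = 0) :
    (fun y => f (x₀ + y) - (m ! : 𝕜)⁻¹ • iteratedFDeriv 𝕜 m f x₀ (fun _ => y))
      =O[𝓝 0] fun y => ‖y‖ ^ (m + 1) := by
  obtain ⟨p, r, hp⟩ := hf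
  have hsum : ∀ y, p.partialSum (m + 1) y
      = (m ! : 𝕜)⁻¹ • iteratedFDeriv 𝕜 m f x₀ (fun _ => y) := by
    intro y
    rw [FormalMultilinearSeries.partialSum, Finset.sum_range_succ,
      hp.apply_diag_eq_inv_factorial_smul, Finset.sum_eq_zero, zero_add]
    intro j hj
    rw [hp.apply_diag_eq_inv_factorial_smul, hlow j (Finset.mem_range.mp hj),
      zero_apply, smul_zero]
  simpa only [hsum] using HasFPowerSeriesAt.isBigO_sub_partialSum_pow ⟨r, hp⟩ (m + 1)

end PowerSeries

section Real

variable {E F : Type*} [NormedAddCommGroup E] [NormedSpace ℝ E] [NormedAddCommGroup F]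
  [NormedSpace ℝ F]

theorem ContinuousMultilinearMap.apply_diag_eq_zero_of_isBigO {ι : Type*} {l : Filter ι}
    [l.NeBot] {m : ℕ} (T : ContinuousMultilinearMap ℝ (fun _ : Fin m => E) F) {x : ι → E} {w : E}
    (hlim : Tendsto x l (𝓝 0)) (hdir : Tendsto (fun i => ‖x i‖⁻¹ • x i) l (𝓝 w))
    (hO : (fun i => T fun _ => x i) =O[l] fun i => ‖x i‖ ^ (m + 1)) :
    T (fun _ => w) = 0 := by
  have hhom : ∀ i, T (fun _ => ‖x i‖⁻¹ • x i) = (‖x i‖⁻¹ ^ m) • T fun _ => x i := by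
    intro i
    simp [T.map_smul_univ (fun _ => ‖x i‖⁻¹) (fun _ => x i)]
  -- also when `x i = 0`, as `‖0‖⁻¹ = 0`
  have hnorm : ∀ i, ‖x i‖⁻¹ ^ m * ‖x i‖ ^ (m + 1) = ‖x i‖ := by
    intro i
    rcases eq_or_ne ‖x i‖ 0 with h | h
    · simp [h]
    · rw [pow_succ, ← mul_assoc, inv_pow, inv_mul_cancel₀ (pow_ne_zero m h), one_mul]
  have hO' : (fun i => T fun _ => ‖x i‖⁻¹ • x i) =O[l] fun i => ‖x i‖ := by
    simpa only [hhom, smul_eq_mul, hnorm] using (isBigO_refl (fun i => ‖x i‖⁻¹ ^ m) l).smul hO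
  refine tendsto_nhds_unique ((T.cont.tendsto _).comp (tendsto_pi_nhds.2 fun _ => hdir)) ?_
  exact hO'.trans_tendsto (tendsto_norm_zero.comp hlim)

end Real

section Field

variable {𝕜 E F : Type*} [NontriviallyNormedField 𝕜]
  [NormedAddCommGroup E] [NormedSpace 𝕜 E] [NormedAddCommGroup F] [NormedSpace 𝕜 F]

theorem ContinuousMultilinearMap.hasFDerivAt_diag_of_comp_perm {n : ℕ}
    (f : ContinuousMultilinearMap 𝕜 (fun _ : Fin (n + 1) => E) F)
    (hf : ∀ (v : Fin (n + 1) → E) (σ : Perm (Fin (n + 1))), f (v ∘ σ) = f v) (x : E) :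
    HasFDerivAt (fun y => f fun _ => y)
      ((n + 1) • f.toContinuousLinearMap (fun _ => x) (Fin.last n)) x := by
  let diag : E →L[𝕜] (Fin (n + 1) → E) := ContinuousLinearMap.pi fun _ => .id 𝕜 E
  have hterm : ∀ i v, f (update (fun _ => x) i v) = f (update (fun _ => x) (Fin.last n) v) := by
    intro i v
    rw [← hf (update _ (Fin.last n) v) (swap i (Fin.last n)), update_comp_equiv, symm_swap,
      swap_apply_right]
    rfl
  refine ((f.hasFDerivAt (diag x)).comp x diag.hasFDerivAt).congr_fderiv ?_
  ext v
  simp [diag, hterm]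

theorem iteratedFDeriv_fderiv_eq_zero_iff {f : E → F} {x : E} {n : ℕ} :
    iteratedFDeriv 𝕜 n (fderiv 𝕜 f) x = 0 ↔ iteratedFDeriv 𝕜 (n + 1) f x = 0 := by
  rw [iteratedFDeriv_succ_eq_comp_right, comp_apply, LinearIsometryEquiv.map_eq_zero_iff]

end Field

theorem stmt_1_general (ℓ k : ℕ) (hk : 1 ≤ k) (r : ℝ) (hr : 0 < r)
    (q : EuclideanSpace ℝ (Fin ℓ) → ℝ)
    (hq : AnalyticOnNhd ℝ q (Metric.ball 0 r))
    (hder : ∀ j : ℕ, 1 ≤ j → j < k → iteratedFDeriv ℝ j q 0 = 0)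
    (P : EuclideanSpace ℝ (Fin ℓ) → ℝ)
    (hP : ∀ x, P x = ((k.factorial : ℝ))⁻¹ * iteratedFDeriv ℝ k q 0 (fun _ => x))
    (x : ℕ → EuclideanSpace ℝ (Fin ℓ))
    (hlim : Filter.Tendsto x Filter.atTop (nhds 0))
    (w : EuclideanSpace ℝ (Fin ℓ))
    (hdir : Filter.Tendsto (fun i => (‖x i‖)⁻¹ • x i) Filter.atTop (nhds w))
    (hcrit : ∀ i, fderiv ℝ q (x i) = 0) :
    fderiv ℝ P w = 0 := by
  obtain ⟨n, rfl⟩ : ∃ n, k = n + 1 := ⟨k - 1, by omega⟩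
  have hq0 : AnalyticAt ℝ q 0 := hq 0 (Metric.mem_ball_self hr)
  have hlow : ∀ j < n, iteratedFDeriv ℝ j (fderiv ℝ q) 0 = 0 := fun j hj =>
    iteratedFDeriv_fderiv_eq_zero_iff.2 (hder (j + 1) (by omega) (by omega))
  have hO : (fun i => iteratedFDeriv ℝ n (fderiv ℝ q) 0 fun _ => x i)
      =O[atTop] fun i => ‖x i‖ ^ (n + 1) := by
    have := ((hq0.fderiv.isBigO_sub_iteratedFDeriv_diag hlow).comp_tendsto hlim).neg_left
      |>.const_smul_left (n ! : ℝ)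
    refine this.congr_left fun i => ?_
    simp [hcrit, smul_smul, Nat.factorial_ne_zero]
  have hTw : iteratedFDeriv ℝ n (fderiv ℝ q) 0 (fun _ => w) = 0 :=
    ContinuousMultilinearMap.apply_diag_eq_zero_of_isBigO _ hlim hdir hO
  have hsymm := fun v σ => hq0.contDiffAt.iteratedFDeriv_comp_perm (n := n + 1) v σ
  rw [funext hP, ((ContinuousMultilinearMap.hasFDerivAt_diag_of_comp_perm _ hsymm w).const_mul
    _).fderiv]
  ext v
  have hslot : iteratedFDeriv ℝ (n + 1) q 0 (update (fun _ => w) (Fin.last n) v) = 0 := by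
    rw [iteratedFDeriv_succ_apply_right, Fin.init_update_last, update_self]
    exact congrArg (· v) hTw
  simp [hslot]

/-- If `q` is analytic on `B(0,r)`, its derivatives of order `1 ≤ j < k` vanish at `0`,
`P` is the degree-`k` Taylor term of `q` at `0`, and `(x i)` is a sequence of nonzero critical
points of `q` converging to `0` with directions `x i / ‖x i‖` converging to a unit vector `w`,
then `w` is a critical point of `P`. -/
theorem stmt_1 (ℓ k : ℕ) (hℓ : 1 ≤ ℓ) (hk : 1 ≤ k) (r : ℝ) (hr : 0 < r)
    (q : EuclideanSpace ℝ (Fin ℓ) → ℝ)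
    (hq : AnalyticOnNhd ℝ q (Metric.ball 0 r))
    (hder : ∀ j : ℕ, 1 ≤ j → j < k → iteratedFDeriv ℝ j q 0 = 0)
    (P : EuclideanSpace ℝ (Fin ℓ) → ℝ)
    (hP : ∀ x, P x = ((k.factorial : ℝ))⁻¹ * iteratedFDeriv ℝ k q 0 (fun _ => x))
    (x : ℕ → EuclideanSpace ℝ (Fin ℓ))
    (hball : ∀ i, x i ∈ Metric.ball (0 : EuclideanSpace ℝ (Fin ℓ)) r)
    (hne : ∀ i, x i ≠ 0)
    (hlim : Filter.Tendsto x Filter.atTop (nhds 0))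
    (w : EuclideanSpace ℝ (Fin ℓ)) (hw : ‖w‖ = 1)
    (hdir : Filter.Tendsto (fun i => (‖x i‖)⁻¹ • x i) Filter.atTop (nhds w))
    (hcrit : ∀ i, fderiv ℝ q (x i) = 0) :
    fderiv ℝ P w = 0 :=
  stmt_1_general ℓ k hk r hr q hq hder P hP x hlim w hdir hcrit
end

section
/- Let ℓ ≥ 1, r > 0, and let q : ℝ^ℓ → ℝ be real analytic on the open ball B(0,r) ⊂ ℝ^ℓ. Suppose that for every w ∈ ℝ^ℓ there exist δ_w > 0 and a map φ : (−δ_w, δ_w) → B(0,r) with φ(0) = 0, φ differentiable at 0 with φ′(0) = w, and Dq(φ(s)) = 0 for every s ∈ (−δ_w, δ_w). Then q is constant on some open ball centered at 0. -/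
/-!
Let `p` be the power series of the derivative `g = Dq` at `0`. By strong induction every
homogeneous term `p n (w, …, w)` vanishes: if the lower terms vanish, then
`g y = p n (y, …, y) + O(‖y‖ ^ (n + 1))`, and along a curve `φ` of critical points with
`φ' (0) = w` this gives `p n (φ s, …, φ s) = O(|s| ^ (n + 1))`; dividing by `s ^ n` and letting
`s → 0` yields `p n (w, …, w) = 0`. Hence `g` vanishes near `0`, and `q` is locally constant.
-/

open Filter Asymptotics Topology

section Analytic

variable {𝕜 E F : Type*} [NontriviallyNormedField 𝕜] [NormedAddCommGroup E] [NormedSpace 𝕜 E]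
  [NormedAddCommGroup F] [NormedSpace 𝕜 F]

theorem ContinuousMultilinearMap.apply_diag_eq_zero_of_isLittleO {n : ℕ}
    (P : ContinuousMultilinearMap 𝕜 (fun _ : Fin n => E) F) {φ : 𝕜 → E} {w : E}
    (hφ₀ : φ 0 = 0) (hφ : HasDerivAt φ w 0)
    (hP : (fun s => P fun _ => φ s) =o[𝓝 0] fun s => s ^ n) :
    P (fun _ => w) = 0 := by
  have hslope : Tendsto (fun s => s⁻¹ • φ s) (𝓝[≠] 0) (𝓝 w) := by
    exact (hasDerivAt_iff_tendsto_slope.1 hφ).congr fun s => by simp [slope_def_module, hφ₀]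
  have h_lim : Tendsto (fun s => P fun _ => s⁻¹ • φ s) (𝓝[≠] 0) (𝓝 (P fun _ => w)) :=
    ((P.cont.comp (continuous_pi fun _ => continuous_id)).tendsto w).comp hslope
  have h_zero : Tendsto (fun s => P fun _ => s⁻¹ • φ s) (𝓝[≠] 0) (𝓝 0) := by
    refine (hP.tendsto_inv_smul_nhds_zero.mono_left nhdsWithin_le_nhds).congr fun s => ?_
    simp [P.map_smul_univ]
  exact tendsto_nhds_unique h_lim h_zero

variable {f : E → F} {p : FormalMultilinearSeries 𝕜 E F} {x : E}

theorem HasFPowerSeriesAt.isBigO_sub_apply_diag (hf : HasFPowerSeriesAt f p x) {n : ℕ}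
    (hlow : ∀ k < n, ∀ y, p k (fun _ => y) = 0) :
    (fun y => f (x + y) - p n fun _ => y) =O[𝓝 0] fun y => ‖y‖ ^ (n + 1) := by
  refine (hf.isBigO_sub_partialSum_pow (n + 1)).congr_left fun y => ?_
  rw [FormalMultilinearSeries.partialSum, Finset.sum_range_succ,
    Finset.sum_eq_zero fun k hk => hlow k (Finset.mem_range.1 hk) y, zero_add]

theorem HasFPowerSeriesAt.apply_diag_eq_zero_of_curve (hf : HasFPowerSeriesAt f p x) {n : ℕ}
    (hlow : ∀ k < n, ∀ y, p k (fun _ => y) = 0) {φ : 𝕜 → E} {w : E}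
    (hφ₀ : φ 0 = 0) (hφ : HasDerivAt φ w 0) (hzero : ∀ᶠ s in 𝓝 0, f (x + φ s) = 0) :
    p n (fun _ => w) = 0 := by
  refine (p n).apply_diag_eq_zero_of_isLittleO hφ₀ hφ ?_
  have hφ_tendsto : Tendsto φ (𝓝 0) (𝓝 0) := hφ₀ ▸ hφ.continuousAt.tendsto
  have hφ_bigO : φ =O[𝓝 0] fun s => s := by simpa [hφ₀] using hφ.isBigO_sub
  have h_taylor : (fun s => p n fun _ => φ s) =O[𝓝 0] fun s => ‖φ s‖ ^ (n + 1) :=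
    ((hf.isBigO_sub_apply_diag hlow).comp_tendsto hφ_tendsto).neg_left.congr'
      (hzero.mono fun s hs => by simp [Function.comp, hs]) EventuallyEq.rfl
  calc (fun s => p n fun _ => φ s)
      =O[𝓝 0] fun s => ‖φ s‖ ^ (n + 1) := h_taylor
    _ =O[𝓝 0] fun s => s ^ (n + 1) := hφ_bigO.norm_left.pow (n + 1)
    _ =o[𝓝 0] fun s => s ^ n := isLittleO_pow_pow n.lt_succ_self

theorem HasFPowerSeriesAt.apply_diag_eq_zero_of_forall_curve (hf : HasFPowerSeriesAt f p x)
    (hcurve : ∀ w, ∃ φ : 𝕜 → E, φ 0 = 0 ∧ HasDerivAt φ w 0 ∧ ∀ᶠ s in 𝓝 0, f (x + φ s) = 0)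
    (n : ℕ) (w : E) : p n (fun _ => w) = 0 := by
  induction n using Nat.strong_induction_on generalizing w with
  | _ n ih =>
    obtain ⟨φ, hφ₀, hφ, hzero⟩ := hcurve w
    exact hf.apply_diag_eq_zero_of_curve ih hφ₀ hφ hzero

theorem AnalyticAt.eventuallyEq_zero_of_forall_curve (hf : AnalyticAt 𝕜 f x)
    (hcurve : ∀ w, ∃ φ : 𝕜 → E, φ 0 = 0 ∧ HasDerivAt φ w 0 ∧ ∀ᶠ s in 𝓝 0, f (x + φ s) = 0) :
    f =ᶠ[𝓝 x] 0 := by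
  obtain ⟨p, hp⟩ := hf
  filter_upwards [hp.eventually_hasSum_sub] with y hy
  exact hy.unique (by simp [hp.apply_diag_eq_zero_of_forall_curve hcurve])

end Analytic

theorem eventuallyEq_const_of_fderiv_eventuallyEq_zero {𝕜 E G : Type*} [RCLike 𝕜]
    [NormedAddCommGroup E] [NormedSpace 𝕜 E] [NormedAddCommGroup G] [NormedSpace 𝕜 G]
    {f : E → G} {x : E} (hf : ∀ᶠ y in 𝓝 x, DifferentiableAt 𝕜 f y)
    (hf' : fderiv 𝕜 f =ᶠ[𝓝 x] 0) : f =ᶠ[𝓝 x] fun _ => f x := by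
  let _ : NormedSpace ℝ E := NormedSpace.restrictScalars ℝ 𝕜 E
  obtain ⟨ε, hε, hball⟩ := Metric.eventually_nhds_iff_ball.1 (hf.and hf')
  filter_upwards [Metric.ball_mem_nhds x hε] with y hy
  exact Metric.isOpen_ball.is_const_of_fderiv_eq_zero Metric.isPreconnected_ball
    (fun z hz => (hball z hz).1.differentiableWithinAt) (fun z hz => (hball z hz).2) hy
    (Metric.mem_ball_self hε)

theorem stmt_2_general (ℓ : ℕ) (r : ℝ) (hr : 0 < r)
    (q : EuclideanSpace ℝ (Fin ℓ) → ℝ)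
    (hq : AnalyticOnNhd ℝ q (Metric.ball 0 r))
    (hint : ∀ w : EuclideanSpace ℝ (Fin ℓ), ∃ δ > (0 : ℝ),
      ∃ φ : ℝ → EuclideanSpace ℝ (Fin ℓ),
        (∀ s : ℝ, |s| < δ → φ s ∈ Metric.ball (0 : EuclideanSpace ℝ (Fin ℓ)) r) ∧
        φ 0 = 0 ∧ HasDerivAt φ w 0 ∧
        (∀ s : ℝ, |s| < δ → fderiv ℝ q (φ s) = 0)) :
    ∃ ρ > (0 : ℝ), ∀ x ∈ Metric.ball (0 : EuclideanSpace ℝ (Fin ℓ)) ρ, q x = q 0 := by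
  have hq₀ : AnalyticAt ℝ q 0 := hq 0 (Metric.mem_ball_self hr)
  have hcrit : fderiv ℝ q =ᶠ[𝓝 0] 0 := by
    refine hq₀.fderiv.eventuallyEq_zero_of_forall_curve fun w => ?_
    obtain ⟨δ, hδ, φ, -, hφ₀, hφ, hφ_crit⟩ := hint w
    refine ⟨φ, hφ₀, hφ, ?_⟩
    filter_upwards [eventually_abs_sub_lt 0 hδ] with s hs
    simpa using hφ_crit s (by simpa using hs)
  have hdiff : ∀ᶠ y in 𝓝 0, DifferentiableAt ℝ q y :=
    hq₀.eventually_analyticAt.mono fun _ hy => hy.differentiableAt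
  exact Metric.eventually_nhds_iff_ball.1
    (eventuallyEq_const_of_fderiv_eventuallyEq_zero hdiff hcrit)

/-- If `q` is analytic on `B(0,r)` and every direction `w` is generated by a one-parameter
family of critical points of `q` through `0`, then `q` is constant on a ball around `0`. -/
theorem stmt_2 (ℓ : ℕ) (hℓ : 1 ≤ ℓ) (r : ℝ) (hr : 0 < r)
    (q : EuclideanSpace ℝ (Fin ℓ) → ℝ)
    (hq : AnalyticOnNhd ℝ q (Metric.ball 0 r))
    (hint : ∀ w : EuclideanSpace ℝ (Fin ℓ), ∃ δ > (0 : ℝ),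
      ∃ φ : ℝ → EuclideanSpace ℝ (Fin ℓ),
        (∀ s : ℝ, |s| < δ → φ s ∈ Metric.ball (0 : EuclideanSpace ℝ (Fin ℓ)) r) ∧
        φ 0 = 0 ∧ HasDerivAt φ w 0 ∧
        (∀ s : ℝ, |s| < δ → fderiv ℝ q (φ s) = 0)) :
    ∃ ρ > (0 : ℝ), ∀ x ∈ Metric.ball (0 : EuclideanSpace ℝ (Fin ℓ)) ρ, q x = q 0 :=
  stmt_2_general ℓ r hr q hq hint
end

section
/- Let (X. d) be a metric space, let M ⊆ X be a nonempty compact subset, let Y ∈ ℝ, and let Q : X → ℝ satisfy Q(u) ≥ Y for all u ∈ X. Assume: (i) for every v ∈ M there exist δ_v > 0, c_v > 0 and γ_v ≥ 0 such that for every u ∈ X with d(u,v) ≤ δ_v one has Q(u) − Y ≥ c_v · ( inf { d(u,w) : w ∈ M, d(w,v) ≤ δ_v } )^{2+γ_v}; and (ii) for every ε > 0 there exists η > 0 such that every u ∈ X with Q(u) − Y < η satisfies infDist(u, M) < ε. Then there exist c > 0 and γ ≥ 0 such that for every u ∈ X, Q(u) − Y ≥ c · ( min( infDist(u, M), 1 )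 )^{2+γ}. -/
/-- Abstract covering/compactness argument: local quantitative stability around each point of a
nonempty compact set `M` of minimizers, plus the property that small energy deficit forces
closeness to `M`, yields a global quantitative stability estimate. -/
theorem stmt_6 {X : Type*} [MetricSpace X] (M : Set X) (hM : M.Nonempty) (hMc : IsCompact M)
    (Y : ℝ) (Q : X → ℝ) (hQ : ∀ u : X, Y ≤ Q u)
    (hloc : ∀ v ∈ M, ∃ δ > (0 : ℝ), ∃ c > (0 : ℝ), ∃ γ : ℝ, 0 ≤ γ ∧
      ∀ u : X, dist u v ≤ δ →
        Q u - Y ≥ c * (sInf ((fun w => dist u w) ''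
            {w : X | w ∈ M ∧ dist w v ≤ δ})) ^ ((2 : ℝ) + γ))
    (hcpt : ∀ ε > (0 : ℝ), ∃ η > (0 : ℝ), ∀ u : X, Q u - Y < η → Metric.infDist u M < ε) :
    ∃ c > (0 : ℝ), ∃ γ : ℝ, 0 ≤ γ ∧
      ∀ u : X, Q u - Y ≥ c * (min (Metric.infDist u M) 1) ^ ((2 : ℝ) + γ) := by
  -- totalize the data from hloc
  have hloc' : ∀ v : X, ∃ δ : ℝ, 0 < δ ∧ ∃ c : ℝ, 0 < c ∧ ∃ γ : ℝ, 0 ≤ γ ∧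
      (v ∈ M → ∀ u : X, dist u v ≤ δ →
        Q u - Y ≥ c * (sInf ((fun w => dist u w) ''
            {w : X | w ∈ M ∧ dist w v ≤ δ})) ^ ((2 : ℝ) + γ)) := by
    intro v
    by_cases hv : v ∈ M
    · obtain ⟨δ, hδ, c, hc, γ, hγ, h⟩ := hloc v hv
      exact ⟨δ, hδ, c, hc, γ, hγ, fun _ => h⟩
    · exact ⟨1, one_pos, 1, one_pos, 0, le_refl _, fun h => absurd h hv⟩
  choose δ hδ c hc γ hγ0 hloc2 using hloc'
  -- finite subcover by balls of radius δ v / 2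
  obtain ⟨t, htM, hcov⟩ := hMc.elim_nhds_subcover (fun v => Metric.ball v (δ v / 2))
    (fun v _ => Metric.ball_mem_nhds v (half_pos (hδ v)))
  have ht : t.Nonempty := by
    obtain ⟨x, hx⟩ := hM
    have := hcov hx
    simp only [Set.mem_iUnion] at this
    obtain ⟨v, hv, _⟩ := this
    exact ⟨v, hv⟩
  set ρ : ℝ := t.inf' ht (fun v => δ v / 2) with hρdef
  have hρ : 0 < ρ := by
    apply Finset.lt_inf'_iff ht (f := fun v => δ v / 2) (a := (0:ℝ)) |>.2
    intro v _; exact half_pos (hδ v)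
  obtain ⟨η, hη, hηp⟩ := hcpt ρ hρ
  set Γ : ℝ := t.sup' ht γ with hΓdef
  have hΓ0 : 0 ≤ Γ := by
    obtain ⟨v, hv⟩ := ht
    exact le_trans (hγ0 v) (Finset.le_sup' γ hv)
  set C : ℝ := min η (t.inf' ht c) with hCdef
  have hC : 0 < C := by
    apply lt_min hη
    apply Finset.lt_inf'_iff ht (f := c) (a := (0:ℝ)) |>.2
    intro v _; exact hc v
  refine ⟨C, hC, Γ, hΓ0, fun u => ?_⟩
  set m : ℝ := min (Metric.infDist u M) 1 with hmdef
  have hm0 : 0 ≤ m := le_min Metric.infDist_nonneg zero_le_one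
  have hm1 : m ≤ 1 := min_le_right _ _
  by_cases hcase : Q u - Y < η
  · -- small deficit: u is close to M, use a local estimate
    have hnear : Metric.infDist u M < ρ := hηp u hcase
    obtain ⟨w, hwM, hw⟩ := (Metric.infDist_lt_iff hM).1 hnear
    have := hcov hwM
    simp only [Set.mem_iUnion] at this
    obtain ⟨v, hvt, hwv⟩ := this
    have hvM : v ∈ M := htM v hvt
    have hρv : ρ ≤ δ v / 2 := Finset.inf'_le _ hvt
    have hduv : dist u v ≤ δ v := by
      have h1 : dist u v ≤ dist u w + dist w v := dist_triangle u w v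
      have h2 : dist w v < δ v / 2 := by simpa [Metric.mem_ball] using hwv
      linarith [hw.trans_le hρv]
    have hkey := hloc2 v hvM u hduv
    set S : ℝ := sInf ((fun w => dist u w) '' {w : X | w ∈ M ∧ dist w v ≤ δ v}) with hSdef
    have hmS : m ≤ S := by
      have h1 : Metric.infDist u M ≤ S := by
        apply le_csInf
        · exact ⟨dist u v, v, ⟨hvM, by simp [le_of_lt (hδ v)]⟩, rfl⟩
        · rintro b ⟨w', ⟨hw'M, _⟩, rfl⟩
          exact Metric.infDist_le_dist_of_mem hw'M
      exact le_trans (min_le_left _ _) h1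
    have step1 : m ^ ((2:ℝ) + Γ) ≤ m ^ ((2:ℝ) + γ v) := by
      rcases eq_or_lt_of_le hm0 with h0 | h0
      · rw [← h0, Real.zero_rpow (show ((2:ℝ) + Γ) ≠ 0 from by linarith),
          Real.zero_rpow (show ((2:ℝ) + γ v) ≠ 0 from by linarith [hγ0 v])]
      · exact Real.rpow_le_rpow_of_exponent_ge h0 hm1
          (by linarith [Finset.le_sup' γ hvt])
    have step2 : m ^ ((2:ℝ) + γ v) ≤ S ^ ((2:ℝ) + γ v) :=
      Real.rpow_le_rpow hm0 hmS (by linarith [hγ0 v])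
    have hCv : C ≤ c v := le_trans (min_le_right _ _) (Finset.inf'_le _ hvt)
    calc C * m ^ ((2:ℝ) + Γ) ≤ c v * S ^ ((2:ℝ) + γ v) := by
          apply mul_le_mul hCv (step1.trans step2) (Real.rpow_nonneg hm0 _) (le_of_lt (hc v))
      _ ≤ Q u - Y := hkey
  · -- large deficit: trivial bound
    push_neg at hcase
    have h1 : m ^ ((2:ℝ) + Γ) ≤ 1 := Real.rpow_le_one hm0 hm1 (by linarith)
    calc C * m ^ ((2:ℝ) + Γ) ≤ η * 1 := by
          apply mul_le_mul (min_le_left _ _) h1 (Real.rpow_nonneg hm0 _) (le_of_lt hη)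
      _ = η := mul_one η
      _ ≤ Q u - Y := hcase
end
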